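/- arXiv:math/0204327 — 9 statements merged into one kernel-verified Lean document; each statement's English description precedes it below -/
import Mathlib

section
/- Let ξ be an additive U-cocycle and let W be a multiplicative U-cocycle that is Markovian with respect to ξ. Define ξ'_t = W_t ξ_t for t ≤ 0 and ξ'_t = ξ_t for t > 0, and U'_t = W_t U_t for t ∈ ℝ. Then U' is a one-parameter group of unitary operators and ξ' is an additive U'-cocycle: ξ'_{t+s} = ξ'_t + U'_t ξ'_s for all s,t ∈ ℝ. -/
open Filter Topology

noncomputable section

/-- The closed linear span of the increments `ξ s - ξ r` with `s, r ≥ t`. -/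
def futureSpan {H : Type*} [NormedAddCommGroup H] [InnerProductSpace ℂ H]
    (ξ : ℝ → H) (t : ℝ) : Submodule ℂ H :=
  (Submodule.span ℂ {x | ∃ s r, t ≤ s ∧ t ≤ r ∧ x = ξ s - ξ r}).topologicalClosure

/-- if `ξ` is an additive `U`-cocycle and `W` a Markovian multiplicative
`U`-cocycle, then `U'_t = W_t U_t` is a one-parameter group of unitaries and
`ξ'_t = W_t ξ_t` (for `t ≤ 0`), `ξ'_t = ξ_t` (for `t > 0`) is an additive `U'`-cocycle. -/
theorem stmt1
    {H : Type*} [NormedAddCommGroup H] [InnerProductSpace ℂ H] [CompleteSpace H]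
    (U : ℝ → (H ≃ₗᵢ[ℂ] H)) (W : ℝ → (H ≃ₗᵢ[ℂ] H)) (ξ : ℝ → H)
    (hUgrp : ∀ s t : ℝ, ∀ x : H, U (s + t) x = U s (U t x))
    (hU0 : ∀ x : H, U 0 x = x)
    (hUcont : ∀ x : H, Continuous fun t : ℝ => U t x)
    (hWcont : ∀ x : H, Continuous fun t : ℝ => W t x)
    (hW0 : ∀ x : H, W 0 x = x)
    (hWcoc : ∀ t s : ℝ, ∀ x : H, W (t + s) x = W t (U t (W s ((U t).symm x))))
    (hξcont : Continuous ξ) (hξ0 : ξ 0 = 0)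
    (hξcoc : ∀ t s : ℝ, ξ (t + s) = ξ t + U t (ξ s))
    (hWmark : ∀ t : ℝ, 0 ≤ t → ∀ f ∈ futureSpan ξ t, W t f = f)
    (ξ' : ℝ → H)
    (hξ'neg : ∀ t : ℝ, t ≤ 0 → ξ' t = W t (ξ t))
    (hξ'pos : ∀ t : ℝ, 0 < t → ξ' t = ξ t) :
    (∀ s t : ℝ, ∀ x : H, W (s + t) (U (s + t) x) = W s (U s (W t (U t x)))) ∧
      (∀ x : H, W 0 (U 0 x) = x) ∧
      Continuous ξ' ∧ ξ' 0 = 0 ∧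
      (∀ t s : ℝ, ξ' (t + s) = ξ' t + W t (U t (ξ' s))) := by
  -- basic group facts
  have hUinv : ∀ t : ℝ, ∀ x : H, U t (U (-t) x) = x := by
    intro t x; rw [← hUgrp, add_neg_cancel, hU0]
  have hUsymm : ∀ t : ℝ, ∀ x : H, (U t).symm x = U (-t) x := by
    intro t x
    apply (U t).injective
    rw [(U t).apply_symm_apply, hUinv]
  have hincr : ∀ a b : ℝ, U a (ξ b) = ξ (a + b) - ξ a := by
    intro a b; rw [hξcoc a b]; abel
  have hmem : ∀ r a b : ℝ, r ≤ a → r ≤ b → ξ a - ξ b ∈ futureSpan ξ r := by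
    intro r a b ha hb
    exact Submodule.le_topologicalClosure _ (Submodule.subset_span ⟨a, b, ha, hb, rfl⟩)
  have hWfix : ∀ r a b : ℝ, 0 ≤ r → r ≤ a → r ≤ b → W r (ξ a - ξ b) = ξ a - ξ b := by
    intro r a b hr ha hb; exact hWmark r hr _ (hmem r a b ha hb)
  have hWU : ∀ a b : ℝ, ∀ x : H, W (a + b) (U a x) = W a (U a (W b x)) := by
    intro a b x
    rw [hWcoc a b (U a x), (U a).symm_apply_apply]
  have hUneg : ∀ a : ℝ, U a (ξ (-a)) = -ξ a := by
    intro a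
    rw [hincr, add_neg_cancel, hξ0, zero_sub]
  have hWfixneg : ∀ s c : ℝ, s ≤ 0 → 0 ≤ c → W s (ξ c) = ξ c := by
    intro s c hs hc
    have h := hWcoc s (-s) (ξ c)
    rw [add_neg_cancel, hW0, hUsymm, hincr (-s) c,
      hWfix (-s) (-s + c) (-s) (by linarith) (by linarith) le_rfl,
      ← hincr (-s) c, hUinv] at h
    exact h.symm
  refine ⟨?_, ?_, ?_, ?_, ?_⟩
  · intro s t x
    rw [hUgrp s t x]
    exact hWU s t (U t x)
  · intro x
    rw [hU0, hW0]
  · -- continuity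
    have hWxi : Continuous fun t : ℝ => W t (ξ t) := by
      rw [continuous_iff_continuousAt]
      intro t₀
      rw [ContinuousAt, tendsto_iff_norm_sub_tendsto_zero]
      have h1 : Filter.Tendsto (fun t : ℝ => ‖ξ t - ξ t₀‖) (nhds t₀) (nhds 0) := by
        exact tendsto_iff_norm_sub_tendsto_zero.mp (hξcont.tendsto t₀)
      have h2 : Filter.Tendsto (fun t : ℝ => ‖W t (ξ t₀) - W t₀ (ξ t₀)‖) (nhds t₀) (nhds 0) := by
        exact tendsto_iff_norm_sub_tendsto_zero.mp ((hWcont (ξ t₀)).tendsto t₀)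
      have hb := h1.add h2
      rw [add_zero] at hb
      refine squeeze_zero (fun t => norm_nonneg _) (fun t => ?_) hb
      calc ‖W t (ξ t) - W t₀ (ξ t₀)‖
          ≤ ‖W t (ξ t) - W t (ξ t₀)‖ + ‖W t (ξ t₀) - W t₀ (ξ t₀)‖ := norm_sub_le_norm_sub_add_norm_sub _ _ _
        _ = ‖ξ t - ξ t₀‖ + ‖W t (ξ t₀) - W t₀ (ξ t₀)‖ := by
            rw [← map_sub, (W t).norm_map]
    have hξ'eq : ξ' = fun t => if t ≤ 0 then W t (ξ t) else ξ t := by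
      funext t
      by_cases h : t ≤ 0
      · rw [if_pos h, hξ'neg t h]
      · rw [if_neg h, hξ'pos t (lt_of_not_ge h)]
    rw [hξ'eq]
    exact Continuous.if_le hWxi hξcont continuous_id continuous_const
      (fun t h => by have h' : t = 0 := h; rw [h', hξ0, hW0])
  · rw [hξ'neg 0 le_rfl, hξ0, hW0]
  · intro t s
    rcases le_or_gt t 0 with ht | ht
    · rcases le_or_gt s 0 with hs | hs
      · -- Case A : t ≤ 0, s ≤ 0
        have hUtnt : U t (ξ (-t)) = -ξ t := hUneg t
        rw [hξ'neg (t+s) (by linarith), hξ'neg t ht, hξ'neg s hs]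
        have e1 : ξ (t+s) = U t (ξ s - ξ (-t)) := by
          rw [map_sub, hUtnt, hξcoc t s]; abel
        rw [e1, hWU t s, map_sub, hWfixneg s (-t) hs (by linarith), map_sub, hUtnt,
          sub_neg_eq_add, map_add]
        abel
      · rcases le_or_gt (t+s) 0 with hts | hts
        · -- Case B : t ≤ 0, s > 0, t+s ≤ 0
          rw [hξ'neg (t+s) hts, hξ'neg t ht, hξ'pos s hs, ← map_add, ← hξcoc]
          have h := hWU (t+s) (-s) (-ξ (-(t+s)))
          rw [show t + s + -s = t by ring] at h
          simp only [map_neg] at h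
          rw [hUneg (t+s), hWfixneg (-s) (-(t+s)) (by linarith) (by linarith),
            hUneg (t+s)] at h
          simp only [map_neg, neg_neg] at h
          exact h.symm
        · -- Case C : t ≤ 0, s > 0, t+s > 0
          rw [hξ'pos (t+s) hts, hξ'neg t ht, hξ'pos s hs, ← map_add, ← hξcoc,
            hWfixneg t (t+s) ht (le_of_lt hts)]
    · rcases le_or_gt s 0 with hs | hs
      · rcases le_or_gt (t+s) 0 with hts | hts
        · -- Case D : t > 0, s ≤ 0, t+s ≤ 0
          rw [hξ'neg (t+s) hts, hξ'pos t ht, hξ'neg s hs, ← hWU t s, hincr t s,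
            map_sub, hWfixneg (t+s) t hts (le_of_lt ht)]
          abel
        · -- Case E : t > 0, s ≤ 0, t+s > 0
          rw [hξ'pos (t+s) hts, hξ'pos t ht, hξ'neg s hs, ← hWU t s, hincr t s,
            hWfix (t+s) (t+s) t (le_of_lt hts) le_rfl (by linarith)]
          abel
      · -- Case F : t > 0, s > 0
        rw [hξ'pos (t+s) (by linarith), hξ'pos t ht, hξ'pos s hs, hincr t s,
          hWfix t (t+s) t (le_of_lt ht) (by linarith) le_rfl]
        abel
end
end

section
/- Let ξ be an additive U-cocycle and let W be a multiplicative U-cocycle that is Markovian with respect to ξ. Then W_{-t-s} f = W_{-s} f for all s,t ≥ 0 and every f ∈ H^ξ_{[-s}. -/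
open Filter Topology

noncomputable section

/-- if `ξ` is an additive `U`-cocycle and `W` a multiplicative `U`-cocycle
Markovian with respect to `ξ`, then `W_{-t-s} f = W_{-s} f` for all `s, t ≥ 0` and every
`f ∈ H^ξ_{[-s}`. -/
theorem stmt2
    {H : Type*} [NormedAddCommGroup H] [InnerProductSpace ℂ H] [CompleteSpace H]
    (U : ℝ → (H ≃ₗᵢ[ℂ] H)) (W : ℝ → (H ≃ₗᵢ[ℂ] H)) (ξ : ℝ → H)
    (hUgrp : ∀ s t : ℝ, ∀ x : H, U (s + t) x = U s (U t x))
    (hU0 : ∀ x : H, U 0 x = x)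
    (hUcont : ∀ x : H, Continuous fun t : ℝ => U t x)
    (hWcont : ∀ x : H, Continuous fun t : ℝ => W t x)
    (hW0 : ∀ x : H, W 0 x = x)
    (hWcoc : ∀ t s : ℝ, ∀ x : H, W (t + s) x = W t (U t (W s ((U t).symm x))))
    (hξcont : Continuous ξ) (hξ0 : ξ 0 = 0)
    (hξcoc : ∀ t s : ℝ, ξ (t + s) = ξ t + U t (ξ s))
    (hWmark : ∀ t : ℝ, 0 ≤ t → ∀ f ∈ futureSpan ξ t, W t f = f) :
    ∀ s t : ℝ, 0 ≤ s → 0 ≤ t → ∀ f ∈ futureSpan ξ (-s), W (-t - s) f = W (-s) f := by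
  have hUinv : ∀ a : ℝ, ∀ x : H, (U a).symm x = U (-a) x := by
    intro a x
    apply (U a).injective
    rw [(U a).apply_symm_apply, ← hUgrp, show a + -a = 0 from by ring, hU0]
  have hmap : ∀ a r : ℝ, ∀ g ∈ futureSpan ξ r, U a g ∈ futureSpan ξ (a + r) := by
    intro a r g hg
    have hsub : futureSpan ξ r ≤
        (futureSpan ξ (a + r)).comap ((U a).toLinearEquiv.toLinearMap) := by
      apply Submodule.topologicalClosure_minimal
      · rw [Submodule.span_le]
        rintro x ⟨p, q, hp, hq, rfl⟩
        simp only [SetLike.mem_coe, Submodule.mem_comap]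
        have hx : U a (ξ p - ξ q) = ξ (a + p) - ξ (a + q) := by
          have h1 := hξcoc a p
          have h2 := hξcoc a q
          rw [map_sub, show U a (ξ p) = ξ (a + p) - ξ a by rw [h1]; abel,
            show U a (ξ q) = ξ (a + q) - ξ a by rw [h2]; abel]
          abel
        rw [show ((U a).toLinearEquiv.toLinearMap (ξ p - ξ q)) = U a (ξ p - ξ q) from rfl, hx]
        exact Submodule.le_topologicalClosure _
          (Submodule.subset_span ⟨a + p, a + q, by linarith, by linarith, rfl⟩)
      · exact (Submodule.isClosed_topologicalClosure _).preimage (U a).continuous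
    exact hsub hg
  have hneg : ∀ u : ℝ, 0 ≤ u → ∀ g ∈ futureSpan ξ 0, W (-u) g = g := by
    intro u hu g hg
    have hg' : U u g ∈ futureSpan ξ u := by
      have := hmap u 0 g hg
      rwa [add_zero] at this
    have h1 := hWcoc u (-u) (U u g)
    rw [show u + -u = 0 from by ring, hW0, (U u).symm_apply_apply] at h1
    -- h1 : U u g = W u (U u (W (-u) g))
    have h2 : W u (U u (W (-u) g)) = W u (U u g) := by
      rw [← h1, hWmark u hu _ hg']
    have h3 : U u (W (-u) g) = U u g := (W u).injective h2
    exact (U u).injective h3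
  intro s t hs ht f hf
  have hg : U s f ∈ futureSpan ξ 0 := by
    have := hmap s (-s) f hf
    rwa [show s + -s = 0 from by ring] at this
  have key := hWcoc (-s) (-t) f
  rw [hUinv, show -(-s) = s from by ring] at key
  rw [hneg t ht _ hg] at key
  rw [show U (-s) (U s f) = f from by rw [← hUgrp, show -s + s = 0 from by ring, hU0]] at key
  rw [show -t - s = -s + -t from by ring]
  exact key
end
end

section
/- Let ξ be an additive U-cocycle and let W be a multiplicative U-cocycle that is Markovian with respect to ξ. Then for every η ∈ H^ξ the limit W_{-∞} η := lim_{t→+∞} W_{-t} η exists in norm, and the resulting map W_{-∞} : H^ξ → H is a linear isometry satisfying W_{-∞} f = f for every f ∈ H^ξ_{[0} and W_{-∞} f = W_{-s} f for every s ≥ 0 and every f ∈ H^ξ_{[-s}. -/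
open Filter Topology

noncomputable section

/-- The closed linear span of all increments `ξ s - ξ r`. -/
def totalSpan {H : Type*} [NormedAddCommGroup H] [InnerProductSpace ℂ H]
    (ξ : ℝ → H) : Submodule ℂ H :=
  (Submodule.span ℂ {x | ∃ s r, x = ξ s - ξ r}).topologicalClosure

/-- for a Markovian multiplicative `U`-cocycle `W`, the strong limit
`W_{-∞} η = lim_{t → +∞} W_{-t} η` exists for `η ∈ H^ξ`, and defines a linear isometry
`W_{-∞} : H^ξ → H` fixing `H^ξ_{[0}` pointwise and satisfying `W_{-∞} f = W_{-s} f` for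
`f ∈ H^ξ_{[-s}`, `s ≥ 0`. -/
theorem stmt3
    {H : Type*} [NormedAddCommGroup H] [InnerProductSpace ℂ H] [CompleteSpace H]
    (U : ℝ → (H ≃ₗᵢ[ℂ] H)) (W : ℝ → (H ≃ₗᵢ[ℂ] H)) (ξ : ℝ → H)
    (hUgrp : ∀ s t : ℝ, ∀ x : H, U (s + t) x = U s (U t x))
    (hU0 : ∀ x : H, U 0 x = x)
    (hUcont : ∀ x : H, Continuous fun t : ℝ => U t x)
    (hWcont : ∀ x : H, Continuous fun t : ℝ => W t x)
    (hW0 : ∀ x : H, W 0 x = x)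
    (hWcoc : ∀ t s : ℝ, ∀ x : H, W (t + s) x = W t (U t (W s ((U t).symm x))))
    (hξcont : Continuous ξ) (hξ0 : ξ 0 = 0)
    (hξcoc : ∀ t s : ℝ, ξ (t + s) = ξ t + U t (ξ s))
    (hWmark : ∀ t : ℝ, 0 ≤ t → ∀ f ∈ futureSpan ξ t, W t f = f) :
    ∃ Winf : (totalSpan ξ) →ₗᵢ[ℂ] H,
      (∀ η : totalSpan ξ, Tendsto (fun t : ℝ => W (-t) (η : H)) atTop (𝓝 (Winf η))) ∧
      (∀ (f : H) (hf : f ∈ totalSpan ξ), f ∈ futureSpan ξ 0 → Winf ⟨f, hf⟩ = f) ∧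
      (∀ s : ℝ, 0 ≤ s → ∀ (f : H) (hf : f ∈ totalSpan ξ),
        f ∈ futureSpan ξ (-s) → Winf ⟨f, hf⟩ = W (-s) f) := by
  -- U basics
  have hUneg : ∀ (t : ℝ) (x : H), (U t).symm x = U (-t) x := by
    intro t x
    apply (U t).injective
    rw [(U t).apply_symm_apply, ← hUgrp, add_neg_cancel, hU0]
  -- U a maps futureSpan t into futureSpan (a + t)
  have hUmem : ∀ (a t : ℝ) (f : H), f ∈ futureSpan ξ t → U a f ∈ futureSpan ξ (a + t) := by
    intro a t f hf
    have hmaps : Set.MapsTo (U a)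
        ((Submodule.span ℂ {x | ∃ s r, t ≤ s ∧ t ≤ r ∧ x = ξ s - ξ r}) : Set H)
        ((Submodule.span ℂ {x | ∃ s r, a + t ≤ s ∧ a + t ≤ r ∧ x = ξ s - ξ r}) : Set H) := by
      intro y hy
      induction hy using Submodule.span_induction with
      | mem x hx =>
        obtain ⟨s, r, hs, hr, rfl⟩ := hx
        apply Submodule.subset_span
        refine ⟨a + s, a + r, by linarith, by linarith, ?_⟩
        have h1 : ξ (a + s) = ξ a + U a (ξ s) := hξcoc a s
        have h2 : ξ (a + r) = ξ a + U a (ξ r) := hξcoc a r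
        rw [map_sub, h1, h2]
        abel
      | zero => simp
      | add x y hx hy ihx ihy => rw [map_add]; exact add_mem ihx ihy
      | smul c x hx ihx => rw [map_smul]; exact Submodule.smul_mem _ c ihx
    have hf' : f ∈ closure
        ((Submodule.span ℂ {x | ∃ s r, t ≤ s ∧ t ≤ r ∧ x = ξ s - ξ r}) : Set H) := hf
    exact (map_mem_closure (U a).continuous hf' hmaps : _)
  -- antitonicity of futureSpan
  have hanti : ∀ t t' : ℝ, t' ≤ t → futureSpan ξ t ≤ futureSpan ξ t' := by
    intro t t' h
    apply Submodule.topologicalClosure_mono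
    apply Submodule.span_mono
    rintro x ⟨s, r, hs, hr, rfl⟩
    exact ⟨s, r, le_trans h hs, le_trans h hr, rfl⟩
  -- inverse formula
  have hWneg : ∀ (t : ℝ) (x : H), W (-t) x = U (-t) ((W t).symm (U t x)) := by
    intro t x
    have h := hWcoc t (-t) (U t x)
    rw [add_neg_cancel, hW0, (U t).symm_apply_apply] at h
    -- h : U t x = W t (U t (W (-t) x))
    have h2 := congrArg (U t).symm (congrArg (W t).symm h)
    rw [(W t).symm_apply_apply, (U t).symm_apply_apply] at h2
    rw [← h2, hUneg]
  -- Lemma A : W (-r) fixes futureSpan 0 for r ≥ 0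
  have lemA : ∀ r : ℝ, 0 ≤ r → ∀ g ∈ futureSpan ξ 0, W (-r) g = g := by
    intro r hr g hg
    have h1 : U r g ∈ futureSpan ξ r := by
      have := hUmem r 0 g hg; rwa [add_zero] at this
    have h2 : W r (U r g) = U r g := hWmark r hr _ h1
    have h3 : (W r).symm (U r g) = U r g := by
      apply (W r).injective
      rw [(W r).apply_symm_apply, h2]
    rw [hWneg r g, h3, ← hUneg, (U r).symm_apply_apply]
  -- Lemma B : stabilization
  have lemB : ∀ s : ℝ, 0 ≤ s → ∀ f ∈ futureSpan ξ (-s), ∀ t : ℝ, s ≤ t →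
      W (-t) f = W (-s) f := by
    intro s hs f hf t ht
    have key : -t = -s + -(t - s) := by ring
    have h := hWcoc (-s) (-(t - s)) f
    have hUf : (U (-s)).symm f = U s f := by rw [hUneg, neg_neg]
    have hf0 : U s f ∈ futureSpan ξ 0 := by
      have := hUmem s (-s) f hf; rwa [add_neg_cancel] at this
    have hA : W (-(t - s)) (U s f) = U s f := lemA (t - s) (by linarith) _ hf0
    rw [key, h, hUf, hA, ← hUneg, (U s).symm_apply_apply]
  -- density : every element of totalSpan is approximated by elements of some futureSpan (-s)
  have hgen : ∀ x ∈ Submodule.span ℂ {x : H | ∃ s r, x = ξ s - ξ r},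
      ∃ s : ℝ, 0 ≤ s ∧ x ∈ futureSpan ξ (-s) := by
    intro x hx
    induction hx using Submodule.span_induction with
    | mem x hx =>
      obtain ⟨a, b, rfl⟩ := hx
      refine ⟨max 0 (max (-a) (-b)), le_max_left _ _, ?_⟩
      apply Submodule.le_topologicalClosure
      apply Submodule.subset_span
      refine ⟨a, b, ?_, ?_, rfl⟩
      · have := le_max_left (-a) (-b); have := le_max_right (0:ℝ) (max (-a) (-b)); linarith
      · have := le_max_right (-a) (-b); have := le_max_right (0:ℝ) (max (-a) (-b)); linarith
    | zero => exact ⟨0, le_refl _, zero_mem _⟩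
    | add x y hx hy ihx ihy =>
      obtain ⟨s, hs, hxs⟩ := ihx
      obtain ⟨s', hs', hys⟩ := ihy
      refine ⟨max s s', le_trans hs (le_max_left _ _), ?_⟩
      exact add_mem (hanti _ _ (neg_le_neg (le_max_left _ _)) hxs)
        (hanti _ _ (neg_le_neg (le_max_right _ _)) hys)
    | smul c x hx ihx =>
      obtain ⟨s, hs, hxs⟩ := ihx
      exact ⟨s, hs, Submodule.smul_mem _ c hxs⟩
  have hdense : ∀ η : H, η ∈ totalSpan ξ → ∀ ε : ℝ, 0 < ε →
      ∃ s : ℝ, 0 ≤ s ∧ ∃ d ∈ futureSpan ξ (-s), ‖η - d‖ < ε := by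
    intro η hη ε hε
    have hη' : η ∈ closure ((Submodule.span ℂ {x : H | ∃ s r, x = ξ s - ξ r}) : Set H) := hη
    rw [Metric.mem_closure_iff] at hη'
    obtain ⟨d, hd, hdist⟩ := hη' ε hε
    obtain ⟨s, hs, hds⟩ := hgen d hd
    exact ⟨s, hs, d, hds, by rwa [← dist_eq_norm]⟩
  -- existence of the limit
  have hexists : ∀ η : totalSpan ξ, ∃ L : H,
      Tendsto (fun t : ℝ => W (-t) (η : H)) atTop (𝓝 L) := by
    intro η
    rw [← cauchy_map_iff_exists_tendsto]
    rw [Metric.cauchy_iff]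
    refine ⟨map_neBot, ?_⟩
    intro ε hε
    obtain ⟨s, hs, d, hd, hηd⟩ := hdense η η.2 (ε / 3) (by linarith)
    refine ⟨(fun t : ℝ => W (-t) (η : H)) '' Set.Ici s,
      image_mem_map (Ici_mem_atTop s), ?_⟩
    rintro _ ⟨t, ht, rfl⟩ _ ⟨t', ht', rfl⟩
    have e1 := lemB s hs d hd t ht
    have e2 := lemB s hs d hd t' ht'
    have d1 : dist (W (-t) (η : H)) (W (-t) d) = dist (η : H) d := (W (-t)).dist_map _ _
    have d2 : dist (W (-t') d) (W (-t') (η : H)) = dist d (η : H) := (W (-t')).dist_map _ _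
    have d3 : dist (W (-t) d) (W (-t') d) = 0 := by rw [e1, e2, dist_self]
    have hdd : dist (η : H) d < ε / 3 := by rwa [dist_eq_norm]
    calc dist (W (-t) (η : H)) (W (-t') (η : H))
        ≤ dist (W (-t) (η : H)) (W (-t) d) + dist (W (-t) d) (W (-t') d)
          + dist (W (-t') d) (W (-t') (η : H)) := dist_triangle4 _ _ _ _
      _ = dist (η : H) d + 0 + dist d (η : H) := by rw [d1, d2, d3]
      _ < ε := by rw [dist_comm d (η : H)]; linarith
  choose Winf0 hWinf using hexists
  have hadd : ∀ x y : totalSpan ξ, Winf0 (x + y) = Winf0 x + Winf0 y := by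
    intro x y
    refine tendsto_nhds_unique ?_ ((hWinf x).add (hWinf y))
    have : (fun t : ℝ => W (-t) ((x + y : totalSpan ξ) : H))
        = fun t : ℝ => W (-t) (x : H) + W (-t) (y : H) := by
      funext t; rw [Submodule.coe_add, map_add]
    rw [← this]; exact hWinf (x + y)
  have hsmul : ∀ (c : ℂ) (x : totalSpan ξ), Winf0 (c • x) = c • Winf0 x := by
    intro c x
    refine tendsto_nhds_unique ?_ ((hWinf x).const_smul c)
    have : (fun t : ℝ => W (-t) ((c • x : totalSpan ξ) : H))
        = fun t : ℝ => c • W (-t) (x : H) := by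
      funext t; rw [Submodule.coe_smul, map_smul]
    rw [← this]; exact hWinf (c • x)
  have hnorm : ∀ x : totalSpan ξ, ‖Winf0 x‖ = ‖x‖ := by
    intro x
    refine tendsto_nhds_unique ((hWinf x).norm) ?_
    have : (fun t : ℝ => ‖W (-t) (x : H)‖) = fun _ : ℝ => ‖(x : H)‖ := by
      funext t; exact (W (-t)).norm_map _
    rw [this]
    exact tendsto_const_nhds
  refine ⟨⟨{ toFun := Winf0, map_add' := hadd, map_smul' := hsmul }, hnorm⟩, ?_, ?_, ?_⟩
  · intro η; exact hWinf η
  · intro f hf hf0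
    have hstab : ∀ t : ℝ, 0 ≤ t → W (-t) f = f := by
      intro t ht
      have hf0' : f ∈ futureSpan ξ (-(0 : ℝ)) := by rwa [neg_zero]
      have := lemB 0 le_rfl f hf0' t ht
      rwa [neg_zero, hW0] at this
    refine tendsto_nhds_unique (hWinf ⟨f, hf⟩) ?_
    refine Tendsto.congr' ?_ (tendsto_const_nhds (x := f))
    filter_upwards [eventually_ge_atTop (0 : ℝ)] with t ht
    exact (hstab t ht).symm
  · intro s hs f hf hfs
    refine tendsto_nhds_unique (hWinf ⟨f, hf⟩) ?_
    refine Tendsto.congr' ?_ (tendsto_const_nhds (x := W (-s) f))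
    filter_upwards [eventually_ge_atTop s] with t ht
    exact (lemB s hs f hfs t ht).symm
end
end

section
/- Let ξ⁽¹⁾ be an additive U⁽¹⁾-cocycle and ξ⁽²⁾ an additive U⁽²⁾-cocycle in the same Hilbert space H. Suppose there is a linear isometry R : H → H such that R f = f for every f in H^{ξ⁽¹⁾}_{[0} and ξ⁽²⁾_t = R ξ⁽¹⁾_t for all t ∈ ℝ. Then the family W_t := U⁽²⁾_t U⁽¹⁾_{-t}, t ∈ ℝ, is a multiplicative U⁽¹⁾-cocycle which is Markovian with respect to ξ⁽¹⁾, and ξ⁽²⁾_t = W_t ξ⁽¹⁾_t for all t ≤ 0 while ξ⁽²⁾_t = ξ⁽¹⁾_t for all t ≥ 0. -/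
open Filter Topology

noncomputable section

/-- if `R : H → H` is a linear isometry fixing `H^{ξ¹}_{[0}` pointwise and
`ξ²_t = R ξ¹_t`, then `W_t := U²_t U¹_{-t}` is a multiplicative `U¹`-cocycle which is
Markovian with respect to `ξ¹`, and `ξ²_t = W_t ξ¹_t` for `t ≤ 0`, `ξ²_t = ξ¹_t` for
`t ≥ 0`. -/
theorem stmt4
    {H : Type*} [NormedAddCommGroup H] [InnerProductSpace ℂ H] [CompleteSpace H]
    (U1 U2 : ℝ → (H ≃ₗᵢ[ℂ] H)) (ξ1 ξ2 : ℝ → H)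
    (hU1grp : ∀ s t : ℝ, ∀ x : H, U1 (s + t) x = U1 s (U1 t x))
    (hU10 : ∀ x : H, U1 0 x = x)
    (hU1cont : ∀ x : H, Continuous fun t : ℝ => U1 t x)
    (hU2grp : ∀ s t : ℝ, ∀ x : H, U2 (s + t) x = U2 s (U2 t x))
    (hU20 : ∀ x : H, U2 0 x = x)
    (hU2cont : ∀ x : H, Continuous fun t : ℝ => U2 t x)
    (hξ1cont : Continuous ξ1) (hξ10 : ξ1 0 = 0)
    (hξ1coc : ∀ t s : ℝ, ξ1 (t + s) = ξ1 t + U1 t (ξ1 s))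
    (hξ2cont : Continuous ξ2) (hξ20 : ξ2 0 = 0)
    (hξ2coc : ∀ t s : ℝ, ξ2 (t + s) = ξ2 t + U2 t (ξ2 s))
    (R : H →ₗᵢ[ℂ] H)
    (hRfix : ∀ f ∈ futureSpan ξ1 0, R f = f)
    (hRξ : ∀ t : ℝ, ξ2 t = R (ξ1 t)) :
    ∃ W : ℝ → H → H,
      (∀ t : ℝ, ∀ x : H, W t x = U2 t ((U1 t).symm x)) ∧
      (∀ x : H, W 0 x = x) ∧
      (∀ x : H, Continuous fun t : ℝ => W t x) ∧
      (∀ t s : ℝ, ∀ x : H, W (t + s) x = W t (U1 t (W s ((U1 t).symm x)))) ∧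
      (∀ t : ℝ, 0 ≤ t → ∀ f ∈ futureSpan ξ1 t, W t f = f) ∧
      (∀ t : ℝ, t ≤ 0 → ξ2 t = W t (ξ1 t)) ∧
      (∀ t : ℝ, 0 ≤ t → ξ2 t = ξ1 t) := by
  -- (U1 t).symm acts as U1 (-t)
  have hU1neg : ∀ (t : ℝ) (x : H), (U1 t).symm x = U1 (-t) x := by
    intro t x
    apply (U1 t).injective
    rw [LinearIsometryEquiv.apply_symm_apply, ← hU1grp, add_neg_cancel, hU10]
  -- ξ2 = ξ1 on nonnegative times
  have hpos : ∀ t : ℝ, 0 ≤ t → ξ2 t = ξ1 t := by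
    intro t ht
    rw [hRξ, hRfix]
    apply Submodule.le_topologicalClosure
    apply Submodule.subset_span
    exact ⟨t, 0, ht, le_refl 0, by rw [hξ10, sub_zero]⟩
  refine ⟨fun t x => U2 t ((U1 t).symm x), fun _ _ => rfl, ?_, ?_, ?_, ?_, ?_, hpos⟩
  · intro x
    show U2 0 ((U1 0).symm x) = x
    rw [hU1neg, neg_zero, hU10, hU20]
  · -- strong continuity of W
    intro x
    have hg : Continuous fun t : ℝ => U1 (-t) x := (hU1cont x).comp continuous_neg
    have key : ∀ (g : ℝ → H), Continuous g →
        Continuous fun t : ℝ => U2 t (g t) := by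
      intro g hgc
      rw [continuous_iff_continuousAt]
      intro t0
      rw [ContinuousAt, tendsto_iff_norm_sub_tendsto_zero]
      have hb : ∀ t : ℝ, ‖U2 t (g t) - U2 t0 (g t0)‖ ≤
          ‖g t - g t0‖ + ‖U2 t (g t0) - U2 t0 (g t0)‖ := by
        intro t
        calc ‖U2 t (g t) - U2 t0 (g t0)‖
            ≤ ‖U2 t (g t) - U2 t (g t0)‖ + ‖U2 t (g t0) - U2 t0 (g t0)‖ :=
              norm_sub_le_norm_sub_add_norm_sub _ _ _
          _ = ‖g t - g t0‖ + ‖U2 t (g t0) - U2 t0 (g t0)‖ := by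
              rw [← map_sub, (U2 t).norm_map]
      have h1 : Tendsto (fun t : ℝ => ‖g t - g t0‖ + ‖U2 t (g t0) - U2 t0 (g t0)‖)
          (𝓝 t0) (𝓝 0) := by
        have hc : Continuous fun t : ℝ => ‖g t - g t0‖ + ‖U2 t (g t0) - U2 t0 (g t0)‖ :=
          ((hgc.sub continuous_const).norm).add (((hU2cont (g t0)).sub continuous_const).norm)
        have := hc.tendsto t0
        simpa using this
      exact squeeze_zero (fun t => norm_nonneg _) hb h1
    simp only [hU1neg]
    exact key _ hg
  · -- cocycle identity
    intro t s x
    show U2 (t + s) ((U1 (t + s)).symm x) =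
      U2 t ((U1 t).symm (U1 t (U2 s ((U1 s).symm ((U1 t).symm x)))))
    rw [LinearIsometryEquiv.symm_apply_apply, ← hU2grp]
    congr 1
    apply (U1 (t + s)).injective
    rw [LinearIsometryEquiv.apply_symm_apply, hU1grp, LinearIsometryEquiv.apply_symm_apply,
      LinearIsometryEquiv.apply_symm_apply]
  · -- Markovianity
    intro t ht f hf
    set T : H ≃ₗᵢ[ℂ] H := (U1 t).symm.trans (U2 t) with hT
    have hTx : ∀ x : H, T x = U2 t ((U1 t).symm x) := fun x => rfl
    change T f = f
    have hclosed : IsClosed {x : H | T x = x} :=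
      isClosed_eq T.continuous continuous_id
    have hle : futureSpan ξ1 t ≤ Submodule.comap (T.toLinearEquiv.toLinearMap - LinearMap.id) ⊥ := by
      apply Submodule.topologicalClosure_minimal
      · rw [Submodule.span_le]
        rintro _ ⟨s, r, hs, hr, rfl⟩
        simp only [SetLike.mem_coe, Submodule.mem_comap, LinearMap.sub_apply,
          LinearMap.id_apply, Submodule.mem_bot, sub_eq_zero]
        show T (ξ1 s - ξ1 r) = ξ1 s - ξ1 r
        have hs' : ξ1 s = ξ1 t + U1 t (ξ1 (s - t)) := by
          have := hξ1coc t (s - t); rwa [add_sub_cancel] at this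
        have hr' : ξ1 r = ξ1 t + U1 t (ξ1 (r - t)) := by
          have := hξ1coc t (r - t); rwa [add_sub_cancel] at this
        have hsplit : ξ1 s - ξ1 r = U1 t (ξ1 (s - t) - ξ1 (r - t)) := by
          rw [hs', hr', map_sub]; abel
        have h2s : ξ2 s = ξ2 t + U2 t (ξ2 (s - t)) := by
          have := hξ2coc t (s - t); rwa [add_sub_cancel] at this
        have h2r : ξ2 r = ξ2 t + U2 t (ξ2 (r - t)) := by
          have := hξ2coc t (r - t); rwa [add_sub_cancel] at this
        have hst : (0:ℝ) ≤ s - t := sub_nonneg.mpr hs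
        have hrt : (0:ℝ) ≤ r - t := sub_nonneg.mpr hr
        rw [hTx]
        conv_lhs => rw [hsplit]
        rw [LinearIsometryEquiv.symm_apply_apply, map_sub, ← hpos _ hst, ← hpos _ hrt]
        have key : U2 t (ξ2 (s - t)) - U2 t (ξ2 (r - t)) = ξ2 s - ξ2 r := by
          rw [h2s, h2r]; abel
        rw [key, hpos s (le_trans ht hs), hpos r (le_trans ht hr)]
      · have : (Submodule.comap (T.toLinearEquiv.toLinearMap - LinearMap.id) (⊥ : Submodule ℂ H) : Set H)
            = {x : H | T x = x} := by
          ext x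
          simp only [Submodule.mem_comap, SetLike.mem_coe, LinearMap.sub_apply,
            LinearMap.id_apply, Submodule.mem_bot, sub_eq_zero, Set.mem_setOf_eq]
          rfl
        rw [this]
        exact hclosed
    have := hle hf
    simp only [Submodule.mem_comap, LinearMap.sub_apply, LinearMap.id_apply,
      Submodule.mem_bot, sub_eq_zero] at this
    exact this
  · -- negative times
    intro t ht
    have h1 : (U1 t).symm (ξ1 t) = -ξ1 (-t) := by
      apply (U1 t).injective
      rw [LinearIsometryEquiv.apply_symm_apply, map_neg]
      have := hξ1coc t (-t)
      rw [add_neg_cancel, hξ10] at this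
      rw [eq_comm, neg_eq_iff_add_eq_zero, add_comm]
      exact this.symm
    have h2 : ξ2 t = -U2 t (ξ2 (-t)) := by
      have := hξ2coc t (-t)
      rw [add_neg_cancel, hξ20] at this
      rw [eq_comm, neg_eq_iff_add_eq_zero, add_comm]
      exact this.symm
    show ξ2 t = U2 t ((U1 t).symm (ξ1 t))
    rw [h1, map_neg, h2, hpos (-t) (by linarith)]
end
end

section
/- Let ξ⁽¹⁾ be an additive U⁽¹⁾-cocycle, let W be a multiplicative U⁽¹⁾-cocycle that is Markovian with respect to ξ⁽¹⁾, and define ξ⁽²⁾_t = W_t ξ⁽¹⁾_t for t ≤ 0 and ξ⁽²⁾_t = ξ⁽¹⁾_t for t > 0. Then the strong limit W_{-∞} := lim_{t→+∞} W_{-t} (which exists on H^{ξ⁽¹⁾}) is a linear isometry of H^{ξ⁽¹⁾} into H fixing every element of H^{ξ⁽¹⁾}_{[0}, and ξ⁽²⁾_t = W_{-∞} ξ⁽¹⁾_t for all t ∈ ℝ. -/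
open Filter Topology

noncomputable section

/-- if `ξ²` is the Markovian cocycle perturbation of the additive cocycle `ξ¹`
(`ξ²_t = W_t ξ¹_t` for `t ≤ 0`, `ξ²_t = ξ¹_t` for `t > 0`), then the strong limit
`W_{-∞} = lim_{t → +∞} W_{-t}` exists on `H^{ξ¹}`, is a linear isometry of `H^{ξ¹}` into `H`
fixing `H^{ξ¹}_{[0}` pointwise, and `ξ²_t = W_{-∞} ξ¹_t` for all `t ∈ ℝ`. -/
theorem stmt5
    {H : Type*} [NormedAddCommGroup H] [InnerProductSpace ℂ H] [CompleteSpace H]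
    (U1 : ℝ → (H ≃ₗᵢ[ℂ] H)) (W : ℝ → (H ≃ₗᵢ[ℂ] H)) (ξ1 ξ2 : ℝ → H)
    (hU1grp : ∀ s t : ℝ, ∀ x : H, U1 (s + t) x = U1 s (U1 t x))
    (hU10 : ∀ x : H, U1 0 x = x)
    (hU1cont : ∀ x : H, Continuous fun t : ℝ => U1 t x)
    (hWcont : ∀ x : H, Continuous fun t : ℝ => W t x)
    (hW0 : ∀ x : H, W 0 x = x)
    (hWcoc : ∀ t s : ℝ, ∀ x : H, W (t + s) x = W t (U1 t (W s ((U1 t).symm x))))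
    (hξ1cont : Continuous ξ1) (hξ10 : ξ1 0 = 0)
    (hξ1coc : ∀ t s : ℝ, ξ1 (t + s) = ξ1 t + U1 t (ξ1 s))
    (hWmark : ∀ t : ℝ, 0 ≤ t → ∀ f ∈ futureSpan ξ1 t, W t f = f)
    (hξ2neg : ∀ t : ℝ, t ≤ 0 → ξ2 t = W t (ξ1 t))
    (hξ2pos : ∀ t : ℝ, 0 < t → ξ2 t = ξ1 t) :
    ∃ Winf : (totalSpan ξ1) →ₗᵢ[ℂ] H,
      (∀ η : totalSpan ξ1, Tendsto (fun t : ℝ => W (-t) (η : H)) atTop (𝓝 (Winf η))) ∧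
      (∀ (f : H) (hf : f ∈ totalSpan ξ1), f ∈ futureSpan ξ1 0 → Winf ⟨f, hf⟩ = f) ∧
      (∀ (t : ℝ) (h : ξ1 t ∈ totalSpan ξ1), ξ2 t = Winf ⟨ξ1 t, h⟩) := by
  -- inverse of U1
  have hU1symm : ∀ (t : ℝ) (x : H), (U1 t).symm x = U1 (-t) x := by
    intro t x
    apply (U1 t).injective
    rw [(U1 t).apply_symm_apply]
    have h := hU1grp t (-t) x
    rw [add_neg_cancel, hU10] at h
    exact h
  -- monotonicity of futureSpan
  have hmono : ∀ {a b : ℝ}, a ≤ b → futureSpan ξ1 b ≤ futureSpan ξ1 a := by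
    intro a b hab
    apply Submodule.topologicalClosure_mono
    apply Submodule.span_mono
    rintro x ⟨s, r, hs, hr, rfl⟩
    exact ⟨s, r, hab.trans hs, hab.trans hr, rfl⟩
  -- U1 t maps futureSpan r into futureSpan (r + t)
  have hUmap : ∀ (t r : ℝ) (f : H), f ∈ futureSpan ξ1 r → U1 t f ∈ futureSpan ξ1 (r + t) := by
    intro t r f hf
    have hmaps : Set.MapsTo (U1 t)
        (↑(Submodule.span ℂ {x : H | ∃ s r', r ≤ s ∧ r ≤ r' ∧ x = ξ1 s - ξ1 r'}) : Set H)
        (↑(Submodule.span ℂ {x : H | ∃ s r', r + t ≤ s ∧ r + t ≤ r' ∧ x = ξ1 s - ξ1 r'}) : Set H) := by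
      intro x hx
      induction hx using Submodule.span_induction with
      | mem x hx =>
        obtain ⟨s, r', hs, hr', rfl⟩ := hx
        apply Submodule.subset_span
        refine ⟨t + s, t + r', by linarith, by linarith, ?_⟩
        have h3 : U1 t (ξ1 s - ξ1 r') = U1 t (ξ1 s) - U1 t (ξ1 r') := map_sub _ _ _
        rw [h3, hξ1coc t s, hξ1coc t r']
        abel
      | zero => simp
      | add x y _ _ hx hy => simpa [map_add] using Submodule.add_mem _ hx hy
      | smul c x _ hx => simpa [map_smul] using Submodule.smul_mem _ c hx
    have hf' : f ∈ closure (↑(Submodule.span ℂ {x : H | ∃ s r', r ≤ s ∧ r ≤ r' ∧ x = ξ1 s - ξ1 r'}) : Set H) := by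
      rw [← Submodule.topologicalClosure_coe]; exact hf
    have := map_mem_closure (U1 t).continuous hf' hmaps
    rw [← Submodule.topologicalClosure_coe] at this
    exact this
  -- eventual constancy of W (-t) on futureSpan r
  have hev : ∀ (r : ℝ) (f : H), f ∈ futureSpan ξ1 r →
      ∀ t' t : ℝ, -r ≤ t' → t' ≤ t → W (-t) f = W (-t') f := by
    intro r f hf t' t ht' htt
    have h1 : (-t') = (-t) + (t - t') := by ring
    rw [h1, hWcoc]
    have h2 : (U1 (-t)).symm f = U1 t f := by rw [hU1symm, neg_neg]
    rw [h2]
    have h3 : U1 t f ∈ futureSpan ξ1 (t - t') := hmono (by linarith) (hUmap t r f hf)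
    rw [hWmark (t - t') (by linarith) _ h3]
    have h4 : U1 (-t) (U1 t f) = f := by
      have h := hU1grp (-t) t f
      rw [neg_add_cancel, hU10] at h
      exact h.symm
    rw [h4]
  -- every element of the plain span lies in some futureSpan
  have hspanIn : ∀ g ∈ Submodule.span ℂ {x : H | ∃ s r, x = ξ1 s - ξ1 r},
      ∃ r, g ∈ futureSpan ξ1 r := by
    intro g hg
    induction hg using Submodule.span_induction with
    | mem x hx =>
      obtain ⟨s, r, rfl⟩ := hx
      exact ⟨min s r, Submodule.le_topologicalClosure _
        (Submodule.subset_span ⟨s, r, min_le_left _ _, min_le_right _ _, rfl⟩)⟩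
    | zero => exact ⟨0, Submodule.zero_mem _⟩
    | add x y _ _ hx hy =>
      obtain ⟨r1, h1⟩ := hx
      obtain ⟨r2, h2⟩ := hy
      exact ⟨min r1 r2, Submodule.add_mem _ (hmono (min_le_left _ _) h1)
        (hmono (min_le_right _ _) h2)⟩
    | smul c x _ hx =>
      obtain ⟨r, h⟩ := hx
      exact ⟨r, Submodule.smul_mem _ c h⟩
  -- existence of the strong limit
  have hex : ∀ f : H, f ∈ totalSpan ξ1 →
      ∃ y, Tendsto (fun t : ℝ => W (-t) f) atTop (𝓝 y) := by
    intro f hf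
    apply cauchySeq_tendsto_of_complete
    rw [Metric.cauchySeq_iff]
    intro ε hε
    have hf' : f ∈ closure (↑(Submodule.span ℂ {x : H | ∃ s r, x = ξ1 s - ξ1 r}) : Set H) := by
      rw [← Submodule.topologicalClosure_coe]; exact hf
    obtain ⟨g, hg, hfg⟩ := SeminormedAddCommGroup.mem_closure_iff.mp hf' (ε / 3) (by linarith)
    obtain ⟨r, hgr⟩ := hspanIn g hg
    refine ⟨max 1 (-r), fun m hm n hn => ?_⟩
    have hWm : W (-m) g = W (-(max 1 (-r))) g := hev r g hgr _ m (le_max_right _ _) hm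
    have hWn : W (-n) g = W (-(max 1 (-r))) g := hev r g hgr _ n (le_max_right _ _) hn
    calc dist (W (-m) f) (W (-n) f)
        ≤ dist (W (-m) f) (W (-m) g) + dist (W (-m) g) (W (-n) g)
          + dist (W (-n) g) (W (-n) f) := dist_triangle4 _ _ _ _
      _ = ‖f - g‖ + 0 + ‖f - g‖ := by
          rw [(W (-m)).dist_map, (W (-n)).dist_map, hWm, hWn, dist_self,
            dist_comm g f, dist_eq_norm]
      _ < ε := by linarith
  obtain ⟨L, hL⟩ : ∃ L : totalSpan ξ1 → H,
      ∀ η : totalSpan ξ1, Tendsto (fun t : ℝ => W (-t) (η : H)) atTop (𝓝 (L η)) :=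
    ⟨fun η => (hex η η.2).choose, fun η => (hex η η.2).choose_spec⟩
  have madd : ∀ η ζ : totalSpan ξ1, L (η + ζ) = L η + L ζ := by
    intro η ζ
    have h1 : (fun t : ℝ => W (-t) ((η + ζ : totalSpan ξ1) : H))
        = fun t : ℝ => W (-t) (η : H) + W (-t) (ζ : H) := by
      funext t; rw [Submodule.coe_add, map_add]
    exact tendsto_nhds_unique (h1 ▸ hL (η + ζ)) ((hL η).add (hL ζ))
  have msmul : ∀ (c : ℂ) (η : totalSpan ξ1), L (c • η) = c • L η := by
    intro c η
    have h1 : (fun t : ℝ => W (-t) ((c • η : totalSpan ξ1) : H))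
        = fun t : ℝ => c • W (-t) (η : H) := by
      funext t; rw [Submodule.coe_smul, map_smul]
    exact tendsto_nhds_unique (h1 ▸ hL (c • η)) ((hL η).const_smul c)
  have mnorm : ∀ η : totalSpan ξ1, ‖L η‖ = ‖(η : H)‖ := by
    intro η
    have h1 : (fun t : ℝ => ‖W (-t) (η : H)‖) = fun _ : ℝ => ‖(η : H)‖ :=
      funext fun t => (W (-t)).norm_map _
    exact tendsto_nhds_unique (h1 ▸ (hL η).norm) tendsto_const_nhds
  have hfix : ∀ (f : H) (hf : f ∈ totalSpan ξ1), f ∈ futureSpan ξ1 0 → L ⟨f, hf⟩ = f := by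
    intro f hf hf0
    have hconst : ∀ t : ℝ, 0 ≤ t → W (-t) f = f := by
      intro t ht
      have h := hev 0 f hf0 0 t (by norm_num) ht
      rw [neg_zero, hW0] at h
      exact h
    have htend : Tendsto (fun t : ℝ => W (-t) f) atTop (𝓝 f) := by
      apply Tendsto.congr' _ (tendsto_const_nhds (x := f))
      filter_upwards [eventually_ge_atTop (0 : ℝ)] with t ht
      exact (hconst t ht).symm
    exact tendsto_nhds_unique (hL ⟨f, hf⟩) htend
  let Winf : totalSpan ξ1 →ₗᵢ[ℂ] H :=
    { toFun := L
      map_add' := madd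
      map_smul' := fun c η => by simpa using msmul c η
      norm_map' := mnorm }
  refine ⟨Winf, fun η => hL η, hfix, ?_⟩
  intro t h
  by_cases ht : 0 < t
  · rw [hξ2pos t ht]
    have hmem : ξ1 t ∈ futureSpan ξ1 0 :=
      Submodule.le_topologicalClosure _
        (Submodule.subset_span ⟨t, 0, ht.le, le_refl 0, by rw [hξ10, sub_zero]⟩)
    exact (hfix (ξ1 t) h hmem).symm
  · have ht' : t ≤ 0 := le_of_not_gt ht
    rw [hξ2neg t ht']
    have hmem : ξ1 t ∈ futureSpan ξ1 t :=
      Submodule.le_topologicalClosure _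
        (Submodule.subset_span ⟨t, 0, le_refl t, ht', by rw [hξ10, sub_zero]⟩)
    have htend : Tendsto (fun s : ℝ => W (-s) (ξ1 t)) atTop (𝓝 (W t (ξ1 t))) := by
      apply Tendsto.congr' _ (tendsto_const_nhds (x := W t (ξ1 t)))
      filter_upwards [eventually_ge_atTop (-t)] with s hs
      have h2 := hev t (ξ1 t) hmem (-t) s (le_refl (-t)) hs
      rw [neg_neg] at h2
      exact h2.symm
    exact (tendsto_nhds_unique (hL ⟨ξ1 t, h⟩) htend).symm
end
end

section
/- Let ξ be an additive U-cocycle with orthogonal increments and let W be a multiplicative U-cocycle that is Markovian with respect to ξ. Define ξ'_t = W_t ξ_t for t ≤ 0 and ξ'_t = ξ_t for t > 0. Then ξ' has orthogonal increments: ⟨ξ'_{t₁} − ξ'_{s₁}, ξ'_{t₂} − ξ'_{s₂}⟩ = 0 whenever s₁ ≤ t₁ ≤ s₂ ≤ t₂. -/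
noncomputable section

/-!
The Markov property makes `W` blind to the future. In the cocycle identity
`W (u + (v - u)) = W u ∘ U u ∘ W (v - u) ∘ (U u)⁻¹`, the shift `(U u)⁻¹` carries increments of `ξ`
over `[v, ∞)` to increments over `[v - u, ∞)`, which `W (v - u)` fixes; so `W v` and `W u` agree
on them whenever `u ≤ v`. Hence every increment of `ξ'` over `[s, t]` equals
`W (min s 0) (ξ t - ξ s)`, and the increments over `[s₁, t₁]` and `[s₂, t₂]`, `t₁ ≤ s₂`, are images
of increments of `ξ` under the same unitary `W (min s₁ 0)`, so they stay orthogonal.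
-/

section MarkovianPerturbation

variable {H : Type*} [NormedAddCommGroup H] [InnerProductSpace ℂ H]
  {U W : ℝ → H ≃ₗᵢ[ℂ] H} {ξ : ℝ → H}

theorem symm_apply_eq_neg_of_group
    (hUgrp : ∀ s t : ℝ, ∀ x : H, U (s + t) x = U s (U t x)) (hU0 : ∀ x : H, U 0 x = x)
    (t : ℝ) (x : H) : (U t).symm x = U (-t) x :=
  (U t).symm_apply_eq.mpr <| by rw [← hUgrp, add_neg_cancel, hU0]

theorem cocycle_map_sub (hξcoc : ∀ t s : ℝ, ξ (t + s) = ξ t + U t (ξ s)) (u a b : ℝ) :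
    U u (ξ a - ξ b) = ξ (u + a) - ξ (u + b) := by
  rw [map_sub, hξcoc u a, hξcoc u b]
  abel

theorem cocycle_symm_sub
    (hUgrp : ∀ s t : ℝ, ∀ x : H, U (s + t) x = U s (U t x)) (hU0 : ∀ x : H, U 0 x = x)
    (hξcoc : ∀ t s : ℝ, ξ (t + s) = ξ t + U t (ξ s)) (u a b : ℝ) :
    (U u).symm (ξ a - ξ b) = ξ (a - u) - ξ (b - u) := by
  rw [symm_apply_eq_neg_of_group hUgrp hU0, cocycle_map_sub hξcoc, neg_add_eq_sub,
    neg_add_eq_sub]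

theorem sub_mem_futureSpan {t a b : ℝ} (ha : t ≤ a) (hb : t ≤ b) :
    ξ a - ξ b ∈ futureSpan ξ t :=
  Submodule.le_topologicalClosure _ (Submodule.subset_span ⟨a, b, ha, hb, rfl⟩)

theorem markov_apply_sub_eq_of_le
    (hUgrp : ∀ s t : ℝ, ∀ x : H, U (s + t) x = U s (U t x)) (hU0 : ∀ x : H, U 0 x = x)
    (hWcoc : ∀ t s : ℝ, ∀ x : H, W (t + s) x = W t (U t (W s ((U t).symm x))))
    (hξcoc : ∀ t s : ℝ, ξ (t + s) = ξ t + U t (ξ s))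
    (hWmark : ∀ t : ℝ, 0 ≤ t → ∀ f ∈ futureSpan ξ t, W t f = f)
    {u v a b : ℝ} (huv : u ≤ v) (hva : v ≤ a) (hvb : v ≤ b) :
    W v (ξ a - ξ b) = W u (ξ a - ξ b) := by
  have hmark : W (v - u) (ξ (a - u) - ξ (b - u)) = ξ (a - u) - ξ (b - u) :=
    hWmark _ (sub_nonneg.mpr huv) _ (sub_mem_futureSpan (by linarith) (by linarith))
  rw [← add_sub_cancel u v, hWcoc, cocycle_symm_sub hUgrp hU0 hξcoc, hmark,
    cocycle_map_sub hξcoc, add_sub_cancel, add_sub_cancel]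

theorem perturbation_sub_eq
    (hUgrp : ∀ s t : ℝ, ∀ x : H, U (s + t) x = U s (U t x)) (hU0 : ∀ x : H, U 0 x = x)
    (hW0 : ∀ x : H, W 0 x = x)
    (hWcoc : ∀ t s : ℝ, ∀ x : H, W (t + s) x = W t (U t (W s ((U t).symm x))))
    (hξ0 : ξ 0 = 0) (hξcoc : ∀ t s : ℝ, ξ (t + s) = ξ t + U t (ξ s))
    (hWmark : ∀ t : ℝ, 0 ≤ t → ∀ f ∈ futureSpan ξ t, W t f = f)
    {ξ' : ℝ → H} (hξ'neg : ∀ t : ℝ, t ≤ 0 → ξ' t = W t (ξ t))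
    (hξ'pos : ∀ t : ℝ, 0 < t → ξ' t = ξ t) {s t : ℝ} (hst : s ≤ t) :
    ξ' t - ξ' s = W (min s 0) (ξ t - ξ s) := by
  have hW {u v a : ℝ} (huv : u ≤ v) (hva : v ≤ a) (hv0 : v ≤ 0) : W v (ξ a) = W u (ξ a) := by
    simpa only [hξ0, sub_zero] using
      markov_apply_sub_eq_of_le hUgrp hU0 hWcoc hξcoc hWmark (b := 0) huv hva hv0
  rcases le_or_gt s 0 with hs | hs
  · rw [min_eq_left hs, hξ'neg s hs, map_sub]
    rcases le_or_gt t 0 with ht | ht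
    · rw [hξ'neg t ht, hW hst le_rfl ht]
    · rw [hξ'pos t ht, ← hW hs ht.le le_rfl, hW0]
  · rw [min_eq_right hs.le, hW0, hξ'pos t (hs.trans_le hst), hξ'pos s hs]

end MarkovianPerturbation

theorem stmt6_general
    {H : Type*} [NormedAddCommGroup H] [InnerProductSpace ℂ H]
    (U : ℝ → (H ≃ₗᵢ[ℂ] H)) (W : ℝ → (H ≃ₗᵢ[ℂ] H)) (ξ ξ' : ℝ → H)
    (hUgrp : ∀ s t : ℝ, ∀ x : H, U (s + t) x = U s (U t x))
    (hU0 : ∀ x : H, U 0 x = x)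
    (hW0 : ∀ x : H, W 0 x = x)
    (hWcoc : ∀ t s : ℝ, ∀ x : H, W (t + s) x = W t (U t (W s ((U t).symm x))))
    (hξ0 : ξ 0 = 0)
    (hξcoc : ∀ t s : ℝ, ξ (t + s) = ξ t + U t (ξ s))
    (hortho : ∀ s₁ t₁ s₂ t₂ : ℝ, Disjoint (Set.Ioo s₁ t₁) (Set.Ioo s₂ t₂) →
      (inner ℂ (ξ t₁ - ξ s₁) (ξ t₂ - ξ s₂) : ℂ) = 0)
    (hWmark : ∀ t : ℝ, 0 ≤ t → ∀ f ∈ futureSpan ξ t, W t f = f)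
    (hξ'neg : ∀ t : ℝ, t ≤ 0 → ξ' t = W t (ξ t))
    (hξ'pos : ∀ t : ℝ, 0 < t → ξ' t = ξ t) :
    ∀ s₁ t₁ s₂ t₂ : ℝ, s₁ ≤ t₁ → t₁ ≤ s₂ → s₂ ≤ t₂ →
      (inner ℂ (ξ' t₁ - ξ' s₁) (ξ' t₂ - ξ' s₂) : ℂ) = 0 := by
  intro s₁ t₁ s₂ t₂ h₁ h₂ h₃
  have hincr {s t : ℝ} (hst : s ≤ t) :=
    perturbation_sub_eq hUgrp hU0 hW0 hWcoc hξ0 hξcoc hWmark hξ'neg hξ'pos hst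
  have hmin : min s₁ 0 ≤ min s₂ 0 := min_le_min_right 0 (h₁.trans h₂)
  have hsecond : W (min s₂ 0) (ξ t₂ - ξ s₂) = W (min s₁ 0) (ξ t₂ - ξ s₂) :=
    markov_apply_sub_eq_of_le hUgrp hU0 hWcoc hξcoc hWmark hmin
      ((min_le_left _ _).trans h₃) (min_le_left _ _)
  rw [hincr h₁, hincr h₃, hsecond, LinearIsometryEquiv.inner_map_map]
  exact hortho _ _ _ _ <| Set.disjoint_left.mpr fun x hx hx' => by linarith [hx.2, hx'.1]

/-- the Markovian cocycle perturbation `ξ'` of an additive `U`-cocycle `ξ`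
with orthogonal increments again has orthogonal increments. -/
theorem stmt6
    {H : Type*} [NormedAddCommGroup H] [InnerProductSpace ℂ H] [CompleteSpace H]
    (U : ℝ → (H ≃ₗᵢ[ℂ] H)) (W : ℝ → (H ≃ₗᵢ[ℂ] H)) (ξ ξ' : ℝ → H)
    (hUgrp : ∀ s t : ℝ, ∀ x : H, U (s + t) x = U s (U t x))
    (hU0 : ∀ x : H, U 0 x = x)
    (hUcont : ∀ x : H, Continuous fun t : ℝ => U t x)
    (hWcont : ∀ x : H, Continuous fun t : ℝ => W t x)
    (hW0 : ∀ x : H, W 0 x = x)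
    (hWcoc : ∀ t s : ℝ, ∀ x : H, W (t + s) x = W t (U t (W s ((U t).symm x))))
    (hξcont : Continuous ξ) (hξ0 : ξ 0 = 0)
    (hξcoc : ∀ t s : ℝ, ξ (t + s) = ξ t + U t (ξ s))
    (hortho : ∀ s₁ t₁ s₂ t₂ : ℝ, Disjoint (Set.Ioo s₁ t₁) (Set.Ioo s₂ t₂) →
      (inner ℂ (ξ t₁ - ξ s₁) (ξ t₂ - ξ s₂) : ℂ) = 0)
    (hWmark : ∀ t : ℝ, 0 ≤ t → ∀ f ∈ futureSpan ξ t, W t f = f)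
    (hξ'neg : ∀ t : ℝ, t ≤ 0 → ξ' t = W t (ξ t))
    (hξ'pos : ∀ t : ℝ, 0 < t → ξ' t = ξ t) :
    ∀ s₁ t₁ s₂ t₂ : ℝ, s₁ ≤ t₁ → t₁ ≤ s₂ → s₂ ≤ t₂ →
      (inner ℂ (ξ' t₁ - ξ' s₁) (ξ' t₂ - ξ' s₂) : ℂ) = 0 :=
  stmt6_general U W ξ ξ' hUgrp hU0 hW0 hWcoc hξ0 hξcoc hortho hWmark hξ'neg hξ'pos
end
end

section
/- Let (λ_k)_{k∈ℕ} be complex numbers with Re λ_k < 0 for every k and ∑_k |Re λ_k| < ∞. Then for every λ ∈ ℂ with Re λ > 0 the infinite product Θ(λ) = ∏_k (λ + conj(λ_k))/(λ − λ_k) converges (the family of factors is multipliable), each factor and the product satisfy |(λ + conj(λ_k))/(λ − λ_k)| < 1 and |Θ(λ)| ≤ 1, and along the positive real axis one has the asymptotic expansion lim_{x→+∞} x (Θ(x) − 1) = 2 ∑_k Re λ_k. -/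
/-!
Write each factor as `1 + u_k(z)` with `u_k(z) = 2 Re λ_k / (z - λ_k)`. Since
`|z - λ_k| ≥ Re z`, one has `|u_k(z)| ≤ 2 |Re λ_k| / Re z`, so the product converges
absolutely, and the identity `|z + conj a|² = |z - a|² + 4 Re z Re a` bounds the factors by `1`.
For the asymptotics, `x (Θ(x) - 1) = x ∑ u_k(x) + x (∏ (1 + u_k(x)) - 1 - ∑ u_k(x))`.
The first term tends to `2 ∑ Re λ_k` by dominated convergence (`|x u_k(x)| ≤ 2 |Re λ_k|`),
and the second is `O(1/x)`, because the second-order remainder of a product is at most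
`exp A - 1 - A ≤ A²` with `A = ∑ |u_k(x)| = O(1/x)`.
-/

open Filter Topology

noncomputable section

section SecondOrder

variable {ι R : Type*} [NormedCommRing R] [NormOneClass R]

theorem Finset.norm_prod_one_add_sub_one_sub_sum_le (t : Finset ι) (f : ι → R) :
    ‖∏ i ∈ t, (1 + f i) - 1 - ∑ i ∈ t, f i‖ ≤
      Real.exp (∑ i ∈ t, ‖f i‖) - 1 - ∑ i ∈ t, ‖f i‖ := by
  classical
  induction t using Finset.induction_on with
  | empty => simp
  | insert x t hx IH =>
    rw [Finset.prod_insert hx, Finset.sum_insert hx, Finset.sum_insert hx, Real.exp_add,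
      show (1 + f x) * ∏ i ∈ t, (1 + f i) - 1 - (f x + ∑ i ∈ t, f i) =
        (∏ i ∈ t, (1 + f i) - 1 - ∑ i ∈ t, f i) + f x * (∏ i ∈ t, (1 + f i) - 1) by ring]
    refine (norm_add_le_of_le IH ((norm_mul_le _ _).trans
      (mul_le_mul_of_nonneg_left (t.norm_prod_one_add_sub_one_le f) (norm_nonneg _)))).trans ?_
    nlinarith [Real.add_one_le_exp ‖f x‖, Real.exp_pos (∑ i ∈ t, ‖f i‖)]

variable [CompleteSpace R]

theorem norm_tprod_one_add_sub_one_sub_tsum_le {f : ι → R} (hf : Summable fun i ↦ ‖f i‖) :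
    ‖∏' i, (1 + f i) - 1 - ∑' i, f i‖ ≤ Real.exp (∑' i, ‖f i‖) - 1 - ∑' i, ‖f i‖ :=
  le_of_tendsto_of_tendsto'
    ((((multipliable_one_add_of_summable hf).hasProd.sub_const 1).sub hf.of_norm.hasSum).norm)
    ((((Real.continuous_exp.tendsto _).comp hf.hasSum).sub_const 1).sub hf.hasSum)
    fun t ↦ t.norm_prod_one_add_sub_one_sub_sum_le f

theorem norm_tprod_one_add_sub_one_sub_tsum_le_sq {f : ι → R} (hf : Summable fun i ↦ ‖f i‖)
    (h1 : ∑' i, ‖f i‖ ≤ 1) :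
    ‖∏' i, (1 + f i) - 1 - ∑' i, f i‖ ≤ (∑' i, ‖f i‖) ^ 2 := by
  have h0 : 0 ≤ ∑' i, ‖f i‖ := tsum_nonneg fun _ ↦ norm_nonneg _
  exact (norm_tprod_one_add_sub_one_sub_tsum_le hf).trans <| (le_abs_self _).trans <|
    Real.abs_exp_sub_one_sub_id_le (by rwa [abs_of_nonneg h0])

end SecondOrder

section Asymptotics

variable {ι R : Type*} [NormedCommRing R] [NormOneClass R] [CompleteSpace R] [NormedAlgebra ℝ R]

theorem tendsto_smul_tprod_one_add_sub_one {f : ℝ → ι → R} {c : ι → R} {b : ι → ℝ}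
    (hb : Summable b) (hlim : ∀ i, Tendsto (fun x ↦ x • f x i) atTop (𝓝 (c i)))
    (hbound : ∀ᶠ x in atTop, ∀ i, ‖x • f x i‖ ≤ b i) :
    Tendsto (fun x : ℝ ↦ x • (∏' i, (1 + f x i) - 1)) atTop (𝓝 (∑' i, c i)) := by
  set B := ∑' i, b i
  have hlinear : Tendsto (fun x ↦ ∑' i, x • f x i) atTop (𝓝 (∑' i, c i)) :=
    tendsto_tsum_of_dominated_convergence hb hlim hbound
  have hremainder :
      Tendsto (fun x : ℝ ↦ x • (∏' i, (1 + f x i) - 1 - ∑' i, f x i)) atTop (𝓝 0) := by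
    refine squeeze_zero_norm' (a := fun x ↦ B ^ 2 / x) ?_ (tendsto_const_nhds.div_atTop tendsto_id)
    filter_upwards [hbound, eventually_gt_atTop 0, eventually_ge_atTop B] with x hx hx0 hxB
    have hfx : ∀ i, ‖f x i‖ ≤ b i / x := fun i ↦ by
      have := hx i
      rw [norm_smul, Real.norm_of_nonneg hx0.le] at this
      rw [le_div_iff₀ hx0]
      linarith
    have hfx_summable : Summable fun i ↦ ‖f x i‖ :=
      (hb.div_const x).of_nonneg_of_le (fun _ ↦ norm_nonneg _) hfx
    have hT : ∑' i, ‖f x i‖ ≤ B / x := by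
      rw [← tsum_div_const]
      exact hfx_summable.tsum_le_tsum hfx (hb.div_const x)
    calc ‖x • (∏' i, (1 + f x i) - 1 - ∑' i, f x i)‖
        = x * ‖∏' i, (1 + f x i) - 1 - ∑' i, f x i‖ := by
          rw [norm_smul, Real.norm_of_nonneg hx0.le]
      _ ≤ x * (B / x) ^ 2 := by
          gcongr
          refine (norm_tprod_one_add_sub_one_sub_tsum_le_sq hfx_summable
            (hT.trans ((div_le_one hx0).mpr hxB))).trans ?_
          gcongr
      _ = B ^ 2 / x := by field_simp
  simpa using (hlinear.add hremainder).congr fun x ↦ by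
    rw [tsum_const_smul'', ← smul_add, add_sub_cancel]

end Asymptotics

def blaschkeFactor (a z : ℂ) : ℂ := (z + starRingEnd ℂ a) / (z - a)

section BlaschkeFactor

variable {a z : ℂ}

theorem re_le_norm_sub_of_re_nonpos (ha : a.re ≤ 0) : z.re ≤ ‖z - a‖ :=
  calc z.re ≤ (z - a).re := by simp only [Complex.sub_re]; linarith
    _ ≤ ‖z - a‖ := Complex.re_le_norm _

theorem sub_ne_zero_of_re_nonpos_of_re_pos (ha : a.re ≤ 0) (hz : 0 < z.re) : z - a ≠ 0 :=
  norm_pos_iff.mp (hz.trans_le (re_le_norm_sub_of_re_nonpos ha))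

theorem norm_add_conj_sq (a z : ℂ) :
    ‖z + starRingEnd ℂ a‖ ^ 2 = ‖z - a‖ ^ 2 + 4 * z.re * a.re := by
  simp only [Complex.sq_norm, Complex.normSq_apply, Complex.add_re, Complex.add_im,
    Complex.sub_re, Complex.sub_im, Complex.conj_re, Complex.conj_im]
  ring

theorem norm_blaschkeFactor_le_one (ha : a.re ≤ 0) (hz : 0 < z.re) :
    ‖blaschkeFactor a z‖ ≤ 1 := by
  have hpos := hz.trans_le (re_le_norm_sub_of_re_nonpos ha)
  rw [blaschkeFactor, norm_div, div_le_one hpos, ← sq_le_sq₀ (norm_nonneg _) hpos.le,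
    norm_add_conj_sq]
  nlinarith

theorem norm_blaschkeFactor_lt_one (ha : a.re < 0) (hz : 0 < z.re) :
    ‖blaschkeFactor a z‖ < 1 := by
  have hpos := hz.trans_le (re_le_norm_sub_of_re_nonpos ha.le)
  rw [blaschkeFactor, norm_div, div_lt_one hpos, ← sq_lt_sq₀ (norm_nonneg _) hpos.le,
    norm_add_conj_sq]
  nlinarith

theorem blaschkeFactor_eq_one_add (h : z - a ≠ 0) :
    blaschkeFactor a z = 1 + 2 * (a.re : ℂ) / (z - a) := by
  rw [blaschkeFactor, one_add_div h]
  congr 1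
  apply Complex.ext <;>
    simp only [Complex.add_re, Complex.add_im, Complex.sub_re, Complex.sub_im, Complex.conj_re,
      Complex.conj_im, Complex.mul_re, Complex.mul_im, Complex.re_ofNat, Complex.im_ofNat,
      Complex.ofReal_re, Complex.ofReal_im] <;>
    ring

theorem norm_two_re_div_sub_le (ha : a.re ≤ 0) (hz : 0 < z.re) :
    ‖2 * (a.re : ℂ) / (z - a)‖ ≤ 2 * |a.re| / z.re := by
  rw [norm_div, norm_mul, Complex.norm_real, Real.norm_eq_abs, Complex.norm_two]
  exact div_le_div_of_nonneg_left (by positivity) hz (re_le_norm_sub_of_re_nonpos ha)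

theorem tendsto_smul_two_re_div_sub (a : ℂ) :
    Tendsto (fun x : ℝ ↦ x • (2 * (a.re : ℂ) / (x - a))) atTop (𝓝 (2 * a.re)) := by
  have hdiv : Tendsto (fun x : ℝ ↦ a / x) atTop (𝓝 0) := by
    simpa [div_eq_mul_inv] using
      ((Complex.continuous_ofReal.tendsto 0).comp tendsto_inv_atTop_zero).const_mul a
  have hinv : Tendsto (fun x : ℝ ↦ (1 - a / x)⁻¹) atTop (𝓝 1) := by
    simpa using (tendsto_const_nhds.sub hdiv).inv₀ (by norm_num : (1 : ℂ) - 0 ≠ 0)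
  refine (mul_one (2 * (a.re : ℂ)) ▸ hinv.const_mul (2 * (a.re : ℂ))).congr' ?_
  filter_upwards [eventually_ne_atTop 0] with x hx
  rw [one_sub_div (Complex.ofReal_ne_zero.mpr hx), inv_div, Complex.real_smul]
  ring

end BlaschkeFactor

section BlaschkeProduct

variable {ι : Type*} {lam : ι → ℂ}

theorem summable_norm_two_re_div_sub (hre : ∀ k, (lam k).re ≤ 0)
    (hsum : Summable fun k ↦ |(lam k).re|) {z : ℂ} (hz : 0 < z.re) :
    Summable fun k ↦ ‖2 * ((lam k).re : ℂ) / (z - lam k)‖ :=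
  ((hsum.mul_left 2).div_const z.re).of_nonneg_of_le (fun _ ↦ norm_nonneg _)
    fun k ↦ norm_two_re_div_sub_le (hre k) hz

theorem multipliable_blaschkeFactor (hre : ∀ k, (lam k).re ≤ 0)
    (hsum : Summable fun k ↦ |(lam k).re|) {z : ℂ} (hz : 0 < z.re) :
    Multipliable fun k ↦ blaschkeFactor (lam k) z :=
  (multipliable_one_add_of_summable (summable_norm_two_re_div_sub hre hsum hz)).congr fun k ↦
    (blaschkeFactor_eq_one_add (sub_ne_zero_of_re_nonpos_of_re_pos (hre k) hz)).symm

theorem norm_tprod_blaschkeFactor_le_one (hre : ∀ k, (lam k).re ≤ 0)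
    (hsum : Summable fun k ↦ |(lam k).re|) {z : ℂ} (hz : 0 < z.re) :
    ‖∏' k, blaschkeFactor (lam k) z‖ ≤ 1 :=
  le_of_tendsto' (multipliable_blaschkeFactor hre hsum hz).hasProd.norm fun _ ↦
    Finset.prod_le_one (fun _ _ ↦ norm_nonneg _) fun k _ ↦ norm_blaschkeFactor_le_one (hre k) hz

theorem tendsto_mul_tprod_blaschkeFactor_sub_one (hre : ∀ k, (lam k).re ≤ 0)
    (hsum : Summable fun k ↦ |(lam k).re|) :
    Tendsto (fun x : ℝ ↦ (x : ℂ) * (∏' k, blaschkeFactor (lam k) x - 1)) atTop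
      (𝓝 (2 * ∑' k, ((lam k).re : ℂ))) := by
  have hbound : ∀ᶠ x : ℝ in atTop, ∀ k,
      ‖x • (2 * ((lam k).re : ℂ) / (x - lam k))‖ ≤ 2 * |(lam k).re| := by
    filter_upwards [eventually_gt_atTop 0] with x hx k
    rw [norm_smul, Real.norm_of_nonneg hx.le, ← le_div_iff₀' hx]
    simpa using norm_two_re_div_sub_le (z := x) (hre k) (by simpa using hx)
  have h := tendsto_smul_tprod_one_add_sub_one (hsum.mul_left 2)
    (fun k ↦ tendsto_smul_two_re_div_sub (lam k)) hbound
  rw [tsum_mul_left] at h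
  refine h.congr' ?_
  filter_upwards [eventually_gt_atTop 0] with x hx
  rw [Complex.real_smul, tprod_congr fun k ↦ blaschkeFactor_eq_one_add
    (sub_ne_zero_of_re_nonpos_of_re_pos (hre k) (by simpa using hx))]

end BlaschkeProduct

/-- for complex numbers `λ_k` with `Re λ_k < 0` and `∑_k |Re λ_k| < ∞`,
the Blaschke product `Θ(λ) = ∏_k (λ + conj λ_k)/(λ − λ_k)` for the right half-plane
converges, each factor and the product have modulus `< 1` resp. `≤ 1`, and along the
positive real axis `lim_{x → +∞} x (Θ(x) − 1) = 2 ∑_k Re λ_k`. -/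
theorem stmt13
    (lam : ℕ → ℂ)
    (hre : ∀ k, (lam k).re < 0)
    (hsum : Summable fun k => |(lam k).re|) :
    (∀ z : ℂ, 0 < z.re →
      Multipliable fun k => (z + starRingEnd ℂ (lam k)) / (z - lam k)) ∧
    (∀ z : ℂ, 0 < z.re → ∀ k, ‖(z + starRingEnd ℂ (lam k)) / (z - lam k)‖ < 1) ∧
    (∀ z : ℂ, 0 < z.re → ‖∏' k, (z + starRingEnd ℂ (lam k)) / (z - lam k)‖ ≤ 1) ∧
    Tendsto
      (fun x : ℝ =>
        (x : ℂ) * ((∏' k, ((x : ℂ) + starRingEnd ℂ (lam k)) / ((x : ℂ) - lam k)) - 1))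
      atTop (𝓝 (2 * ∑' k, ((lam k).re : ℂ))) := by
  have hre' : ∀ k, (lam k).re ≤ 0 := fun k ↦ (hre k).le
  exact ⟨fun z hz ↦ multipliable_blaschkeFactor hre' hsum hz,
    fun z hz k ↦ norm_blaschkeFactor_lt_one (hre k) hz,
    fun z hz ↦ norm_tprod_blaschkeFactor_le_one hre' hsum hz,
    tendsto_mul_tprod_blaschkeFactor_sub_one hre' hsum⟩
end
end

section
/- Let A be a unital ring, let α : ℝ → Aut(A) be a group homomorphism from (ℝ,+) into the group of ring automorphisms of A, let w : ℝ → Aut(A) satisfy w_0 = id and the multiplicative cocycle identity w_{s+t} = w_s ∘ α_s ∘ w_t ∘ α_{-s} for all s,t ∈ ℝ, and let I : ℝ → A satisfy the additive cocycle identity I(t+s) = I(t) + α_t(I(s)) for all s,t ∈ ℝ. Assume the Markov condition: w_t(I(t+s) − I(t)) = I(t+s) − I(t) for all s,t ≥ 0. Then α'_t := w_t ∘ α_t defines a group homomorphism ℝ → Aut(A), and the function I' defined by I'(t) = w_t(I(t)) for t ≤ 0 and I'(t) = I(t) for t > 0 is an additive α'-cocycle: I'(t+s) = I'(t) + α'_t(I'(s))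 for all s,t ∈ ℝ. -/
noncomputable section

/-- Proposition 5.1, abstract form: if `α : ℝ → Aut(A)` is a group
homomorphism, `w` a multiplicative `α`-cocycle and `I` an additive `1-α`-cocycle such that
`w` is Markovian with respect to `I`, then `α'_t := w_t ∘ α_t` is a group homomorphism and
`I'(t) = w_t(I(t))` for `t ≤ 0`, `I'(t) = I(t)` for `t > 0`, is an additive `α'`-cocycle. -/
theorem stmt14
    {A : Type*} [Ring A]
    (α : ℝ → RingAut A) (w : ℝ → RingAut A) (I : ℝ → A)
    (hα0 : ∀ x : A, α 0 x = x)
    (hαgrp : ∀ s t : ℝ, ∀ x : A, α (s + t) x = α s (α t x))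
    (hw0 : ∀ x : A, w 0 x = x)
    (hwcoc : ∀ s t : ℝ, ∀ x : A, w (s + t) x = w s (α s (w t (α (-s) x))))
    (hIcoc : ∀ t s : ℝ, I (t + s) = I t + α t (I s))
    (hmark : ∀ s t : ℝ, 0 ≤ s → 0 ≤ t → w t (I (t + s) - I t) = I (t + s) - I t) :
    (∀ x : A, w 0 (α 0 x) = x) ∧
    (∀ s t : ℝ, ∀ x : A, w (s + t) (α (s + t) x) = w s (α s (w t (α t x)))) ∧
    (∃ I' : ℝ → A,
      (∀ t : ℝ, t ≤ 0 → I' t = w t (I t)) ∧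
      (∀ t : ℝ, 0 < t → I' t = I t) ∧
      (∀ t s : ℝ, I' (t + s) = I' t + w t (α t (I' s)))) := by
  -- basic consequences of the group law for α
  have hαinv : ∀ t : ℝ, ∀ x : A, α (-t) (α t x) = x := by
    intro t x
    rw [← hαgrp, neg_add_cancel, hα0]
  have hαinv' : ∀ t : ℝ, ∀ x : A, α t (α (-t) x) = x := by
    intro t x
    rw [← hαgrp, add_neg_cancel, hα0]
  -- I 0 = 0
  have hI0 : I 0 = 0 := by
    have h := hIcoc 0 0
    rw [add_zero, hα0] at h
    exact left_eq_add.mp h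
  -- increments
  have hinc : ∀ t s : ℝ, I (t + s) - I t = α t (I s) := by
    intro t s; rw [hIcoc, add_sub_cancel_left]
  -- I (-t) = - α (-t) (I t)
  have hIneg : ∀ t : ℝ, I (-t) = - α (-t) (I t) := by
    intro t
    have h := hIcoc (-t) t
    rw [neg_add_cancel, hI0] at h
    exact eq_neg_of_add_eq_zero_left h.symm
  have hIneg' : ∀ t : ℝ, α (-t) (I t) = - I (-t) := by
    intro t; rw [hIneg t, neg_neg]
  -- Markov property in convenient form
  have hM : ∀ t u : ℝ, 0 ≤ t → 0 ≤ u → w t (α t (I u)) = α t (I u) := by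
    intro t u ht hu
    have h := hmark u t hu ht
    rwa [hinc t u] at h
  -- w s fixes I u for s ≤ 0 ≤ u
  have hN : ∀ s u : ℝ, s ≤ 0 → 0 ≤ u → w s (I u) = I u := by
    intro s u hs hu
    have hr : (0:ℝ) ≤ -s := neg_nonneg.mpr hs
    have hc := hwcoc (-s) s (α (-s) (I u))
    rw [neg_add_cancel, hw0, neg_neg, hαinv'] at hc
    -- hc : α (-s) (I u) = w (-s) (α (-s) (w s (I u)))
    have hm := hM (-s) u hr hu
    have h1 : w (-s) (α (-s) (w s (I u))) = w (-s) (α (-s) (I u)) := by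
      rw [hm, ← hc]
    have h2 := (w (-s)).injective h1
    exact (α (-s)).injective h2
  -- the group law for α'
  have hgrp2 : ∀ s t : ℝ, ∀ x : A,
      w (s + t) (α (s + t) x) = w s (α s (w t (α t x))) := by
    intro s t x
    have e : α (-s) (α (s + t) x) = α t x := by
      rw [← hαgrp, neg_add_cancel_left]
    rw [hwcoc, e]
  refine ⟨fun x => by rw [hα0, hw0], hgrp2, ?_⟩
  refine ⟨fun t => if t ≤ 0 then w t (I t) else I t, fun t ht => if_pos ht,
    fun t ht => if_neg (not_le.mpr ht), ?_⟩
  set I' : ℝ → A := fun t => if t ≤ 0 then w t (I t) else I t with hI'def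
  have hle : ∀ t : ℝ, t ≤ 0 → I' t = w t (I t) := fun t ht => if_pos ht
  have hgt : ∀ t : ℝ, 0 < t → I' t = I t := fun t ht => if_neg (not_le.mpr ht)
  have hge : ∀ t : ℝ, 0 ≤ t → I' t = I t := by
    intro t ht
    rcases eq_or_lt_of_le ht with h | h
    · rw [← h]
      show (if (0:ℝ) ≤ 0 then w 0 (I 0) else I 0) = I 0
      rw [if_pos le_rfl, hw0]
    · exact hgt t h
  intro t s
  rcases le_total t 0 with ht | ht <;> rcases le_total s 0 with hs | hs
  · -- t ≤ 0, s ≤ 0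
    have hts : t + s ≤ 0 := add_nonpos ht hs
    rw [hle _ hts, hle _ ht, hle _ hs]
    have e1 : α (-t) (I (t + s)) = α (-t) (I t) + I s := by
      rw [hIcoc, map_add, hαinv]
    have e2 : w s (α (-t) (I t)) = α (-t) (I t) := by
      have h := hN s (-t) hs (neg_nonneg.mpr ht)
      rw [hIneg t, map_neg] at h
      exact neg_injective h
    calc w (t + s) (I (t + s))
        = w t (α t (w s (α (-t) (I (t + s))))) := hwcoc t s _
      _ = w t (α t (w s (α (-t) (I t)) + w s (I s))) := by rw [e1, map_add]
      _ = w t (α t (α (-t) (I t)) + α t (w s (I s))) := by rw [e2, map_add]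
      _ = w t (I t) + w t (α t (w s (I s))) := by rw [hαinv', map_add]
  · -- t ≤ 0, s ≥ 0
    rcases le_total (t + s) 0 with hts | hts
    · rw [hle _ hts, hle _ ht, hge _ hs]
      -- goal : w (t+s) (I (t+s)) = w t (I t) + w t (α t (I s))
      have key : w s (α (-t) (I (t + s))) = α (-t) (I (t + s)) := by
        have e : α (-t) (I (t + s)) = - α s (I (-(t + s))) := by
          have : α (-t) (I (t + s)) = α s (α (-(t + s)) (I (t + s))) := by
            rw [← hαgrp]; ring_nf
          rw [this, hIneg' (t + s), map_neg]
        rw [e, map_neg, hM s (-(t+s)) hs (neg_nonneg.mpr hts)]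
      calc w (t + s) (I (t + s))
          = w t (α t (w s (α (-t) (I (t + s))))) := hwcoc t s _
        _ = w t (α t (α (-t) (I (t + s)))) := by rw [key]
        _ = w t (I (t + s)) := by rw [hαinv']
        _ = w t (I t + α t (I s)) := by rw [hIcoc]
        _ = w t (I t) + w t (α t (I s)) := map_add _ _ _
    · rw [hge _ hts, hle _ ht, hge _ hs]
      -- goal : I (t+s) = w t (I t) + w t (α t (I s))
      calc I (t + s) = w t (I (t + s)) := (hN t (t + s) ht hts).symm
        _ = w t (I t + α t (I s)) := by rw [hIcoc]
        _ = w t (I t) + w t (α t (I s)) := map_add _ _ _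
  · -- t ≥ 0, s ≤ 0
    have ews : w s (I s) = - w s (α s (I (-s))) := by
      have h := hIneg (-s)
      rw [neg_neg] at h
      rw [h, map_neg]
    have e0 : w t (α t (w s (I s))) = - w (t + s) (α (t + s) (I (-s))) := by
      rw [ews, map_neg, map_neg, ← hgrp2]
    rcases le_total (t + s) 0 with hts | hts
    · rw [hle _ hts, hge _ ht, hle _ hs]
      -- goal : w (t+s) (I (t+s)) = I t + w t (α t (w s (I s)))
      have e1 : I (t + s) = - α (t + s) (I (-(t + s))) := by
        have h := hIneg (-(t + s))
        rwa [neg_neg] at h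
      have e2 : I (-s) - I (-(t + s)) = α (-(t + s)) (I t) := by
        have h : I (-s) = I (-(t + s)) + α (-(t + s)) (I t) := by
          have := hIcoc (-(t + s)) t
          rwa [show -(t + s) + t = -s by ring] at this
        rw [h, add_sub_cancel_left]
      have e3 : w (t + s) (α (t + s) (α (-(t + s)) (I t))) = I t := by
        rw [hαinv']
        exact hN (t + s) t hts ht
      rw [e0, e1, map_neg]
      have e4 : I t = w (t + s) (α (t + s) (I (-s))) - w (t + s) (α (t + s) (I (-(t + s)))) := by
        rw [← map_sub, ← map_sub, e2, e3]
      rw [e4]; abel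
    · rw [hge _ hts, hge _ ht, hle _ hs]
      -- goal : I (t+s) = I t + w t (α t (w s (I s)))
      rw [e0, hM (t + s) (-s) hts (neg_nonneg.mpr hs)]
      have h : I t = I (t + s) + α (t + s) (I (-s)) := by
        have := hIcoc (t + s) (-s)
        rwa [show t + s + -s = t by ring] at this
      rw [h]; abel
  · -- t ≥ 0, s ≥ 0
    have hts : (0:ℝ) ≤ t + s := add_nonneg ht hs
    rw [hge _ hts, hge _ ht, hge _ hs]
    rw [hM t s ht hs, hIcoc]
end
end

section
/- Let M be a von Neumann algebra on a complex Hilbert space H and φ a faithful state on M. Let (M_{t]})_{t∈ℝ} and (M_{[t})_{t∈ℝ} be families of von Neumann subalgebras of M such that the union ⋃_{t∈ℝ} M_{[t} equals M, and such that the factorization property φ(x y) = φ(x) φ(y) holds for every x ∈ ⋂_{t∈ℝ} M_{t]} and every y ∈ ⋃_{t∈ℝ} M_{[t}. Then ⋂_{t∈ℝ} M_{t]} is trivial: every x in this intersection equals φ(x)·1. -/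
noncomputable section

/-- Proposition 4.1: if `φ` is a faithful state on a von Neumann algebra
`M`, the future algebras `M_{[t}` exhaust `M`, and `φ` factorizes between the tail algebra
`⋂_t M_{t]}` and the future algebras (independence of increments), then the tail algebra is
trivial: every `x ∈ ⋂_t M_{t]}` equals `φ(x) • 1`. -/
theorem stmt15
    {H : Type*} [NormedAddCommGroup H] [InnerProductSpace ℂ H] [CompleteSpace H]
    (M : VonNeumannAlgebra H)
    (φ : (H →L[ℂ] H) →ₗ[ℂ] ℂ)
    (hφ1 : φ 1 = 1)
    (hφpos : ∀ x ∈ M, 0 ≤ (φ (star x * x)).re ∧ (φ (star x * x)).im = 0)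
    (hφfaithful : ∀ x ∈ M, φ (star x * x) = 0 → x = 0)
    (Mpast Mfut : ℝ → VonNeumannAlgebra H)
    (hpast_le : ∀ t : ℝ, ∀ x ∈ Mpast t, x ∈ M)
    (hfut_le : ∀ t : ℝ, ∀ x ∈ Mfut t, x ∈ M)
    (hunion : ∀ x ∈ M, ∃ t : ℝ, x ∈ Mfut t)
    (hfact : ∀ x : H →L[ℂ] H, (∀ t : ℝ, x ∈ Mpast t) →
      ∀ t : ℝ, ∀ y ∈ Mfut t, φ (x * y) = φ x * φ y) :
    ∀ x : H →L[ℂ] H, (∀ t : ℝ, x ∈ Mpast t) → x = φ x • (1 : H →L[ℂ] H) := by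
  intro x hx
  have hxM : x ∈ M := hpast_le 0 x (hx 0)
  have hsx : ∀ t : ℝ, star x ∈ Mpast t := fun t => star_mem (hx t)
  obtain ⟨t, hxt⟩ := hunion x hxM
  have hfac : φ (star x * x) = φ (star x) * φ x := hfact (star x) hsx t x hxt
  set z : H →L[ℂ] H := x - φ x • 1 with hz
  have hzM : z ∈ M := by
    exact sub_mem hxM (M.toSubalgebra.smul_mem (one_mem M) _)
  have hkey : φ (star z * z) = 0 := by
    have : star z * z = star x * x - φ x • star x
        - (starRingEnd ℂ) (φ x) • x + ((starRingEnd ℂ) (φ x) * φ x) • 1 := by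
      simp only [hz, star_sub, star_smul, star_one, RCLike.star_def, sub_mul, mul_sub,
        smul_mul_assoc, mul_smul_comm, mul_one, one_mul, smul_smul, smul_sub]
      module
    rw [this]
    simp only [map_add, map_sub, map_smul, hφ1, hfac, smul_eq_mul, mul_one]
    ring
  have hz0 : z = 0 := hφfaithful z hzM hkey
  have := sub_eq_zero.mp hz0
  exact this
end
end
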